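/- Fix d ≥ 2, σ > 0, β > 0 and a continuously differentiable K : Δ → (0,∞). Define the matrix field c on Δ by c_{ij}(x) := −σ² K(x)² x^i x^j ( (x^i)^{1−2β} + (x^j)^{1−2β} − Σ_{k=1}^d (x^k)^{2(1−β)} ) for i ≠ j, and c_{ii}(x) := −Σ_{j≠i} c_{ij}(x). Let H(x) := log( K(x)² · (Σ_{k=1}^d (x^k)^{2β})^{(2(1+(d−1)β)−d)/(2β)} · ∏_{i=1}^d (x^i)^{2(1−β)} ). Then for every x ∈ Δ and every index i: Σ_{j≠i} c_{ij}(x) (∂_j − ∂_i)H(x) = Σ_{j≠i} (∂_j − ∂_i) c_{ij}(x); that is, c(x) ∇H(x) = div c(x) on Δ, so c^{-1} div c = ∇H in the generalized volatility-stabilized model. -/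

import Mathlib

open scoped BigOperators

/-- The open unit simplex in `ℝ^d`. -/
def openSimplex (d : ℕ) : Set (Fin d → ℝ) :=
  {x | (∀ i, 0 < x i) ∧ ∑ i, x i = 1}

/-- Directional derivative `(∂_j - ∂_i) h (x)` along `e_j - e_i`. -/
noncomputable def dirDeriv {d : ℕ} (h : (Fin d → ℝ) → ℝ) (x : Fin d → ℝ)
    (i j : Fin d) : ℝ :=
  fderiv ℝ h x (Pi.single j 1 - Pi.single i 1)

/-- The covariance matrix field of the generalized volatility-stabilized model:
`c_{ij}(x) = -σ² K(x)² xⁱ xʲ ((xⁱ)^{1-2β} + (xʲ)^{1-2β} - ∑_k (x^k)^{2(1-β)})` for `i ≠ j`,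
and `c_{ii}(x) = -∑_{j≠i} c_{ij}(x)`. -/
noncomputable def cGVS (d : ℕ) (σ β : ℝ) (K : (Fin d → ℝ) → ℝ)
    (i j : Fin d) (x : Fin d → ℝ) : ℝ :=
  if i = j then
    ∑ k ∈ Finset.univ.filter (fun k => k ≠ i),
      σ ^ 2 * K x ^ 2 * x i * x k *
        (x i ^ (1 - 2 * β) + x k ^ (1 - 2 * β) - ∑ l, x l ^ (2 * (1 - β)))
  else
    -(σ ^ 2 * K x ^ 2 * x i * x j *
        (x i ^ (1 - 2 * β) + x j ^ (1 - 2 * β) - ∑ l, x l ^ (2 * (1 - β))))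

/-- The function `H(x) = log( K(x)² |x|_{2β}^{2(1+(d-1)β)-d} ∏_i (xⁱ)^{2(1-β)} )`, where
`|x|_{2β}^{2(1+(d-1)β)-d} = (∑_k (x^k)^{2β})^{(2(1+(d-1)β)-d)/(2β)}`. -/
noncomputable def Hgvs (d : ℕ) (β : ℝ) (K : (Fin d → ℝ) → ℝ) (x : Fin d → ℝ) : ℝ :=
  Real.log (K x ^ 2 *
    (∑ k, x k ^ (2 * β)) ^ ((2 * (1 + ((d : ℝ) - 1) * β) - (d : ℝ)) / (2 * β)) *
    ∏ i, x i ^ (2 * (1 - β)))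

/-! Multiplying `c` by `K²` and adding `log K²` to `H` multiplies `c ∇H - div c` by `K²`, so it
suffices to treat `K ≡ 1`. Then `H = γ log ∑ (x^k)^{2β} + 2(1-β) ∑ log x^k` with
`2βγ = 2(1+(d-1)β) - d`, and in the variables `x` and `y_k = (x^k)^{2β}` the claim becomes an
algebraic identity which holds because `∑ x^k = 1`. -/

open Finset Filter Topology

section

variable {d : ℕ}

theorem sum_gvs_drift_eq_zero {x y : Fin d → ℝ} (hx : ∀ k, x k ≠ 0) (hy : ∀ k, y k ≠ 0)
    (hT : ∑ k, y k ≠ 0) (hs : ∑ k, x k = 1) (p : ℝ) (i : Fin d) :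
    ∑ j, (x i * x j * (x i / y i + x j / y j - ∑ l, x l ^ 2 / y l) *
          ((p + 1 - p * d) / (∑ k, y k) * (y j / x j - y i / x i)
            + (p + 1) * ((x j)⁻¹ - (x i)⁻¹))
        - ((x i - x j) * (x i / y i + x j / y j - ∑ l, x l ^ 2 / y l)
          + x i * x j * (p * ((y j)⁻¹ - (y i)⁻¹) - (p + 1) * (x j / y j - x i / y i)))) = 0 := by
  set T := ∑ k, y k
  set S := ∑ l, x l ^ 2 / y l
  set g := p + 1 - p * d
  set r := x i / y i - S
  -- Each summand is affine in `1, x j, y j, x j ^ 2 / y j`, whose sums are `d, 1, T, S`.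
  have affine : ∀ j, x i * x j * (x i / y i + x j / y j - S) *
          (g / T * (y j / x j - y i / x i) + (p + 1) * ((x j)⁻¹ - (x i)⁻¹))
        - ((x i - x j) * (x i / y i + x j / y j - S)
          + x i * x j * (p * ((y j)⁻¹ - (y i)⁻¹) - (p + 1) * (x j / y j - x i / y i)))
      = p * x i * r
        + (-(g / T) * y i * r - p * r + g / T * x i + p * (x i / y i) - (p + 1) * x i * (x i / y i))
          * x j
        + g / T * x i * r * y j + (-(g / T) * y i - p + (p + 1) * x i) * (x j ^ 2 / y j) := by
    intro j
    simp only [r]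
    have := hx i; have := hx j; have := hy i; have := hy j
    field_simp
    ring
  simp only [affine, sum_add_distrib, ← mul_sum, sum_const, card_univ,
    Fintype.card_fin, nsmul_eq_mul, hs]
  simp only [r, g]
  have := hx i; have := hy i
  field_simp
  ring

theorem sum_mul_single_sub_single (c : Fin d → ℝ) (i j : Fin d) :
    ∑ k, c k * ((Pi.single j 1 : Fin d → ℝ) k - (Pi.single i 1 : Fin d → ℝ) k) = c j - c i := by
  simp [Pi.single_apply, mul_sub, sum_sub_distrib]

theorem hasFDerivAt_apply_rpow {x : Fin d → ℝ} (k : Fin d) (e : ℝ) (hx : x k ≠ 0) :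
    HasFDerivAt (fun y : Fin d → ℝ => y k ^ e)
      ((e * x k ^ (e - 1)) • ContinuousLinearMap.proj (R := ℝ) (φ := fun _ : Fin d => ℝ) k) x :=
  (hasFDerivAt_apply k x).rpow_const (Or.inl hx)

theorem dirDeriv_log_mul_sub_dirDeriv_mul {F c H : (Fin d → ℝ) → ℝ} {x : Fin d → ℝ}
    (hF : DifferentiableAt ℝ F x) (hFx : F x ≠ 0) (hc : DifferentiableAt ℝ c x)
    (hH : DifferentiableAt ℝ H x) (i j : Fin d) :
    F x * c x * dirDeriv (fun y => Real.log (F y) + H y) x i j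
        - dirDeriv (fun y => F y * c y) x i j
      = F x * (c x * dirDeriv H x i j - dirDeriv c x i j) := by
  rw [dirDeriv, dirDeriv, ((hF.hasFDerivAt.log hFx).fun_add hH.hasFDerivAt).fderiv,
    (hF.hasFDerivAt.fun_mul hc.hasFDerivAt).fderiv]
  simp only [add_apply, smul_apply, smul_eq_mul, dirDeriv]
  field_simp
  ring

theorem Filter.EventuallyEq.dirDeriv_eq {h₁ h₂ : (Fin d → ℝ) → ℝ} {x : Fin d → ℝ}
    (hh : h₁ =ᶠ[𝓝 x] h₂) (i j : Fin d) : dirDeriv h₁ x i j = dirDeriv h₂ x i j := by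
  rw [dirDeriv, dirDeriv, hh.fderiv_eq]

theorem Hgvs_eventuallyEq [NeZero d] (β : ℝ) {K : (Fin d → ℝ) → ℝ} {x : Fin d → ℝ}
    (hK : ContinuousAt K x) (hKx : K x ≠ 0) (hx : ∀ k, 0 < x k) :
    Hgvs d β K =ᶠ[𝓝 x] fun y => Real.log (K y ^ 2)
      + ((2 * (1 + ((d : ℝ) - 1) * β) - (d : ℝ)) / (2 * β) * Real.log (∑ k, y k ^ (2 * β))
        + 2 * (1 - β) * ∑ k, Real.log (y k)) := by
  have hpos : ∀ᶠ y in 𝓝 x, ∀ k, 0 < y k :=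
    eventually_all.2 fun k => continuousAt_const.eventually_lt (continuous_apply k).continuousAt
      (hx k)
  filter_upwards [hpos, hK.eventually_ne hKx] with y hy hKy
  have hT : 0 < ∑ k, y k ^ (2 * β) :=
    sum_pos (fun k _ => Real.rpow_pos_of_pos (hy k) _) univ_nonempty
  have hP : 0 < ∏ k, y k ^ (2 * (1 - β)) := prod_pos fun k _ => Real.rpow_pos_of_pos (hy k) _
  rw [Hgvs, mul_assoc, Real.log_mul (pow_ne_zero 2 hKy) (by positivity),
    Real.log_mul (by positivity) hP.ne', Real.log_rpow hT,
    Real.log_prod fun k _ => (Real.rpow_pos_of_pos (hy k) _).ne', mul_sum]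
  simp only [Real.log_rpow (hy _)]

theorem hasFDerivAt_Hgvs_one [NeZero d] (β : ℝ) {x : Fin d → ℝ} (hx : ∀ k, 0 < x k) :
    HasFDerivAt (Hgvs d β 1)
      (((2 * (1 + ((d : ℝ) - 1) * β) - (d : ℝ)) / (2 * β)) •
          ((∑ k, x k ^ (2 * β))⁻¹ • ∑ k, (2 * β * x k ^ (2 * β - 1)) •
            ContinuousLinearMap.proj (R := ℝ) (φ := fun _ : Fin d => ℝ) k)
        + (2 * (1 - β)) •
          ∑ k, (x k)⁻¹ • ContinuousLinearMap.proj (R := ℝ) (φ := fun _ : Fin d => ℝ) k) x := by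
  have hT : 0 < ∑ k, x k ^ (2 * β) :=
    sum_pos (fun k _ => Real.rpow_pos_of_pos (hx k) _) univ_nonempty
  have hsum := HasFDerivAt.fun_sum (u := univ) fun k _ =>
    hasFDerivAt_apply_rpow k (2 * β) (hx k).ne'
  have hlogs := HasFDerivAt.fun_sum (u := univ) fun k _ =>
    (hasFDerivAt_apply k x).log (hx k).ne'
  refine (((hsum.log hT.ne').const_mul _).fun_add (hlogs.const_mul _)).congr_of_eventuallyEq ?_
  filter_upwards [Hgvs_eventuallyEq (K := 1) β continuous_one.continuousAt one_ne_zero hx]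
    with y hy
  simpa using hy

theorem dirDeriv_Hgvs_one [NeZero d] (β : ℝ) {x : Fin d → ℝ} (hx : ∀ k, 0 < x k) (i j : Fin d) :
    dirDeriv (Hgvs d β 1) x i j =
      (2 * (1 + ((d : ℝ) - 1) * β) - (d : ℝ)) / (2 * β) *
          ((2 * β * x j ^ (2 * β - 1) - 2 * β * x i ^ (2 * β - 1)) / ∑ k, x k ^ (2 * β))
        + 2 * (1 - β) * ((x j)⁻¹ - (x i)⁻¹) := by
  rw [dirDeriv, (hasFDerivAt_Hgvs_one β hx).fderiv]
  simp only [add_apply, smul_apply, FunLike.coe_sum, Finset.sum_apply,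
    ContinuousLinearMap.proj_apply, smul_eq_mul, Pi.sub_apply, sum_mul_single_sub_single]
  ring

theorem cGVS_of_ne (σ β : ℝ) (K : (Fin d → ℝ) → ℝ) {i j : Fin d} (hij : i ≠ j) :
    cGVS d σ β K i j = fun y => K y ^ 2 * -(σ ^ 2 * (y i * y j *
      (y i ^ (1 - 2 * β) + y j ^ (1 - 2 * β) - ∑ l, y l ^ (2 * (1 - β))))) := by
  funext y
  simp only [cGVS, if_neg hij]
  ring

theorem cGVS_eq_mul_cGVS_one (σ β : ℝ) (K : (Fin d → ℝ) → ℝ) {i j : Fin d} (hij : i ≠ j) :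
    cGVS d σ β K i j = fun y => K y ^ 2 * cGVS d σ β 1 i j y := by
  simp only [cGVS_of_ne σ β _ hij, Pi.one_apply, one_pow, one_mul]

theorem differentiableAt_cGVS_one (σ β : ℝ) {i j : Fin d} (hij : i ≠ j) {x : Fin d → ℝ}
    (hx : ∀ k, x k ≠ 0) : DifferentiableAt ℝ (cGVS d σ β 1 i j) x := by
  rw [cGVS_of_ne σ β 1 hij]
  fun_prop (disch := simp [hx])

theorem dirDeriv_cGVS_one (σ β : ℝ) {i j : Fin d} (hij : i ≠ j) {x : Fin d → ℝ}
    (hx : ∀ k, x k ≠ 0) :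
    dirDeriv (cGVS d σ β 1 i j) x i j =
      -(σ ^ 2 * ((x i - x j) * (x i ^ (1 - 2 * β) + x j ^ (1 - 2 * β) - ∑ l, x l ^ (2 * (1 - β)))
        + x i * x j * ((1 - 2 * β) * (x j ^ (1 - 2 * β - 1) - x i ^ (1 - 2 * β - 1))
          - 2 * (1 - β) * (x j ^ (2 * (1 - β) - 1) - x i ^ (2 * (1 - β) - 1))))) := by
  have hprod := (hasFDerivAt_apply (𝕜 := ℝ) i x).fun_mul (hasFDerivAt_apply (𝕜 := ℝ) j x)
  have hbracket := ((hasFDerivAt_apply_rpow i (1 - 2 * β) (hx i)).fun_add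
    (hasFDerivAt_apply_rpow j (1 - 2 * β) (hx j))).fun_sub
      (HasFDerivAt.fun_sum (u := univ) fun l _ => hasFDerivAt_apply_rpow l (2 * (1 - β)) (hx l))
  rw [dirDeriv, cGVS_of_ne σ β 1 hij]
  simp only [Pi.one_apply, one_pow, one_mul]
  rw [((hprod.fun_mul hbracket).const_mul (σ ^ 2)).fun_neg.fderiv]
  simp only [neg_apply, add_apply, sub_apply, smul_apply, FunLike.coe_sum, Finset.sum_apply,
    ContinuousLinearMap.proj_apply, smul_eq_mul, Pi.sub_apply]
  rw [sum_mul_single_sub_single fun l => 2 * (1 - β) * x l ^ (2 * (1 - β) - 1)]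
  simp only [Pi.single_eq_same, Pi.single_eq_of_ne hij, Pi.single_eq_of_ne hij.symm]
  ring

theorem sum_cGVS_one_mul_dirDeriv_Hgvs_one_sub (σ : ℝ) {β : ℝ} (hβ : β ≠ 0) {x : Fin d → ℝ}
    (hx : x ∈ openSimplex d) (i : Fin d) :
    ∑ j ∈ univ.filter (fun j => j ≠ i),
      (cGVS d σ β 1 i j x * dirDeriv (Hgvs d β 1) x i j - dirDeriv (cGVS d σ β 1 i j) x i j)
      = 0 := by
  have : NeZero d := NeZero.of_pos i.pos
  obtain ⟨hpos, hs⟩ := hx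
  have hx0 k : x k ≠ 0 := (hpos k).ne'
  have hy k : x k ^ (2 * β) ≠ 0 := (Real.rpow_pos_of_pos (hpos k) _).ne'
  have hT : ∑ k, x k ^ (2 * β) ≠ 0 :=
    (sum_pos (fun k _ => Real.rpow_pos_of_pos (hpos k) _) univ_nonempty).ne'
  have key := sum_gvs_drift_eq_zero hx0 hy hT hs (1 - 2 * β) i
  rw [← sum_filter_of_ne (p := fun j => j ≠ i) (by rintro j - hj rfl; exact hj (by ring))] at key
  refine (Eq.trans ?_ (congrArg (fun s => -σ ^ 2 * s) key)).trans (mul_zero _)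
  rw [mul_sum]
  refine sum_congr rfl fun j hj => ?_
  have hij : i ≠ j := (mem_filter.1 hj).2.symm
  rw [dirDeriv_Hgvs_one β hpos, dirDeriv_cGVS_one σ β hij hx0, cGVS_of_ne σ β 1 hij]
  have h1 k : x k ^ (2 * β - 1) = x k ^ (2 * β) / x k := by
    rw [Real.rpow_sub (hpos k), Real.rpow_one]
  have h2 k : x k ^ (1 - 2 * β) = x k / x k ^ (2 * β) := by
    rw [Real.rpow_sub (hpos k), Real.rpow_one]
  have h3 k : x k ^ (2 * (1 - β)) = x k ^ 2 / x k ^ (2 * β) := by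
    rw [show 2 * (1 - β) = (2 : ℕ) - 2 * β by push_cast; ring, Real.rpow_sub (hpos k),
      Real.rpow_natCast]
  have h4 k : x k ^ (1 - 2 * β - 1) = (x k ^ (2 * β))⁻¹ := by
    rw [sub_sub_cancel_left, Real.rpow_neg (hpos k).le]
  have h5 k : x k ^ (2 * (1 - β) - 1) = x k / x k ^ (2 * β) := by
    rw [show 2 * (1 - β) - 1 = 1 - 2 * β by ring, h2]
  simp only [Pi.one_apply, one_pow, one_mul, h1, h2, h3, h4, h5]
  have := hx0 i; have := hx0 j; have := hy i; have := hy j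
  field_simp
  ring

end

theorem statement16_general {d : ℕ} (σ β : ℝ) (hβ : 0 < β)
    (K : (Fin d → ℝ) → ℝ) (hK : ContDiff ℝ 1 K)
    (hKpos : ∀ x ∈ openSimplex d, 0 < K x) :
    ∀ x ∈ openSimplex d, ∀ i : Fin d,
      ∑ j ∈ Finset.univ.filter (fun j => j ≠ i),
        cGVS d σ β K i j x * dirDeriv (Hgvs d β K) x i j
        = ∑ j ∈ Finset.univ.filter (fun j => j ≠ i),
            dirDeriv (cGVS d σ β K i j) x i j := by
  intro x hx i
  have : NeZero d := NeZero.of_pos i.pos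
  have hKd : DifferentiableAt ℝ K x := hK.differentiable one_ne_zero x
  have hKx : K x ≠ 0 := (hKpos x hx).ne'
  have hx0 k : x k ≠ 0 := (hx.1 k).ne'
  have hH : Hgvs d β K =ᶠ[𝓝 x] fun y => Real.log (K y ^ 2) + Hgvs d β 1 y := by
    filter_upwards [Hgvs_eventuallyEq β hKd.continuousAt hKx hx.1,
      Hgvs_eventuallyEq (K := 1) β continuous_one.continuousAt one_ne_zero hx.1] with y hKy hone
    rw [hKy, hone, Pi.one_apply, one_pow, Real.log_one, zero_add]
  rw [← sub_eq_zero, ← sum_sub_distrib]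
  calc _ = ∑ j ∈ univ.filter (fun j => j ≠ i), K x ^ 2 *
        (cGVS d σ β 1 i j x * dirDeriv (Hgvs d β 1) x i j - dirDeriv (cGVS d σ β 1 i j) x i j) := by
        refine sum_congr rfl fun j hj => ?_
        have hij : i ≠ j := (mem_filter.1 hj).2.symm
        rw [hH.dirDeriv_eq, cGVS_eq_mul_cGVS_one σ β K hij]
        exact dirDeriv_log_mul_sub_dirDeriv_mul (hKd.pow 2) (pow_ne_zero 2 hKx)
          (differentiableAt_cGVS_one σ β hij hx0)
          (hasFDerivAt_Hgvs_one β hx.1).differentiableAt i j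
    _ = 0 := by rw [← mul_sum, sum_cGVS_one_mul_dirDeriv_Hgvs_one_sub σ hβ.ne' hx i, mul_zero]

/-- in the generalized volatility-stabilized model, `c ∇H = div c` on the
open simplex, interpreted via the tangential directional derivatives `(∂_j - ∂_i)`. -/
theorem statement16 {d : ℕ} (hd : 2 ≤ d) (σ β : ℝ) (hσ : 0 < σ) (hβ : 0 < β)
    (K : (Fin d → ℝ) → ℝ) (hK : ContDiff ℝ 1 K)
    (hKpos : ∀ x ∈ openSimplex d, 0 < K x) :
    ∀ x ∈ openSimplex d, ∀ i : Fin d,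
      ∑ j ∈ Finset.univ.filter (fun j => j ≠ i),
        cGVS d σ β K i j x * dirDeriv (Hgvs d β K) x i j
        = ∑ j ∈ Finset.univ.filter (fun j => j ≠ i),
            dirDeriv (cGVS d σ β K i j) x i j :=
  statement16_general σ β hβ K hK hKpos
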